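/- Let σ > 1 and n ∈ ℕ with n > σ + 1. There exists C > 0 such that for every g ∈ L²(ℝ) the function B g(k) = ∫_ℝ g(ℓ) / ((1 + |k−ℓ|^n)(1+|ℓ|)) dℓ satisfies ∫_ℝ (1+|k|²)^σ |Bg(k)|² dk ≤ C ( ‖g‖_{L²}² + ∫_ℝ (1+|ℓ|²)^{σ−1} |g(ℓ)|² dℓ ). -/

import Mathlib

/-!
Write `⟨x⟩ = (1 + x²)^{1/2}`. Peetre's inequality `⟨k⟩^σ ≤ 2^{σ/2} ⟨k - ℓ⟩^σ ⟨ℓ⟩^σ` together with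
`⟨ℓ⟩ ≤ 1 + |ℓ|` gives `⟨k⟩^σ |Bg(k)| ≤ (K ⋆ h)(k)` with `K(x) = 2^{σ/2} ⟨x⟩^σ / (1 + |x|ⁿ)` and
`h(ℓ) = ⟨ℓ⟩^{σ-1} |g(ℓ)|`. Since `K(x) ≲ (1 + |x|)^{σ-n}` and `n - σ > 1`, `K` is integrable, and
Young's inequality `‖K ⋆ h‖₂ ≤ ‖K‖₁ ‖h‖₂` (weighted Cauchy–Schwarz plus Tonelli) concludes.
-/

open Real MeasureTheory
open scoped ENNReal

section Convolution

theorem ENNReal.lintegral_mul_sq_le {α : Type*} [MeasurableSpace α] {μ : Measure α}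
    {w u : α → ℝ≥0∞} (hw : AEMeasurable w μ) (hu : AEMeasurable u μ) :
    (∫⁻ a, w a * u a ∂μ) ^ 2 ≤ (∫⁻ a, w a ∂μ) * ∫⁻ a, w a * u a ^ 2 ∂μ := by
  have hsplit : ∀ a, w a * u a = w a ^ (2⁻¹ : ℝ) * (w a * u a ^ 2) ^ (2⁻¹ : ℝ) := fun a => by
    rw [ENNReal.mul_rpow_of_nonneg _ _ (by norm_num), ← mul_assoc,
      ← ENNReal.rpow_add_of_nonneg _ _ (by norm_num) (by norm_num),
      ← ENNReal.rpow_natCast, ← ENNReal.rpow_mul]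
    norm_num
  have hholder := ENNReal.lintegral_mul_norm_pow_le hw (hw.mul (hu.pow_const 2))
    (p := 2⁻¹) (q := 2⁻¹) (by norm_num) (by norm_num) (by norm_num)
  calc (∫⁻ a, w a * u a ∂μ) ^ 2
      ≤ ((∫⁻ a, w a ∂μ) ^ (2⁻¹ : ℝ) * (∫⁻ a, w a * u a ^ 2 ∂μ) ^ (2⁻¹ : ℝ)) ^ 2 := by
        simp_rw [hsplit]; gcongr; exact hholder
    _ = (∫⁻ a, w a ∂μ) * ∫⁻ a, w a * u a ^ 2 ∂μ := by
        rw [mul_pow, ← ENNReal.rpow_natCast, ← ENNReal.rpow_natCast, ← ENNReal.rpow_mul,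
          ← ENNReal.rpow_mul]
        norm_num

variable {G : Type*} [AddCommGroup G] [MeasurableSpace G] [MeasurableAdd₂ G] [MeasurableNeg G]
  {μ : Measure G} [SFinite μ] [μ.IsAddLeftInvariant] [μ.IsNegInvariant]

theorem ENNReal.lintegral_convolution_sq_le {H u : G → ℝ≥0∞} (hH : Measurable H)
    (hu : AEMeasurable u μ) :
    ∫⁻ k, (∫⁻ l, H (k - l) * u l ∂μ) ^ 2 ∂μ ≤ (∫⁻ x, H x ∂μ) ^ 2 * ∫⁻ l, u l ^ 2 ∂μ := by
  have hHu : AEMeasurable (fun p : G × G => H (p.1 - p.2) * u p.2 ^ 2) (μ.prod μ) :=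
    (hH.comp measurable_sub).aemeasurable.mul (hu.pow_const 2).comp_snd
  have hpoint : ∀ k, (∫⁻ l, H (k - l) * u l ∂μ) ^ 2 ≤
      (∫⁻ x, H x ∂μ) * ∫⁻ l, H (k - l) * u l ^ 2 ∂μ := fun k => by
    rw [← lintegral_sub_left_eq_self H k]
    exact ENNReal.lintegral_mul_sq_le (hH.comp (measurable_const_sub k)).aemeasurable hu
  have hinner : ∀ l, ∫⁻ k, H (k - l) * u l ^ 2 ∂μ = (∫⁻ x, H x ∂μ) * u l ^ 2 := fun l => by
    rw [lintegral_mul_const (f := fun k => H (k - l)) _ (hH.comp (measurable_sub_const l)),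
      lintegral_sub_right_eq_self H]
  calc ∫⁻ k, (∫⁻ l, H (k - l) * u l ∂μ) ^ 2 ∂μ
      ≤ ∫⁻ k, (∫⁻ x, H x ∂μ) * ∫⁻ l, H (k - l) * u l ^ 2 ∂μ ∂μ := lintegral_mono hpoint
    _ = (∫⁻ x, H x ∂μ) * ∫⁻ l, ∫⁻ k, H (k - l) * u l ^ 2 ∂μ ∂μ := by
        rw [lintegral_const_mul'' _ hHu.lintegral_prod_right', lintegral_lintegral_swap hHu]
    _ = (∫⁻ x, H x ∂μ) ^ 2 * ∫⁻ l, u l ^ 2 ∂μ := by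
        rw [lintegral_congr hinner, lintegral_const_mul'' _ (hu.pow_const 2), sq, mul_assoc]

end Convolution

theorem one_add_sq_rpow_le_one_add_abs_rpow {s : ℝ} (hs : 0 ≤ s) (x : ℝ) :
    (1 + x ^ 2) ^ (s / 2) ≤ (1 + |x|) ^ s := by
  have hsq : 1 + x ^ 2 ≤ (1 + |x|) ^ 2 := by nlinarith [abs_nonneg x, sq_abs x]
  calc (1 + x ^ 2) ^ (s / 2) ≤ ((1 + |x|) ^ 2) ^ (s / 2) := by gcongr
    _ = (1 + |x|) ^ s := by
        rw [← rpow_natCast, ← rpow_mul (by positivity)]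
        congr 1; ring

theorem peetre_inequality {s : ℝ} (hs : 0 ≤ s) (x y : ℝ) :
    (1 + x ^ 2) ^ s ≤ 2 ^ s * (1 + (x - y) ^ 2) ^ s * (1 + y ^ 2) ^ s := by
  have h : 1 + x ^ 2 ≤ 2 * (1 + (x - y) ^ 2) * (1 + y ^ 2) := by
    nlinarith [sq_nonneg (x - 2 * y), sq_nonneg ((x - y) * y)]
  calc (1 + x ^ 2) ^ s ≤ (2 * (1 + (x - y) ^ 2) * (1 + y ^ 2)) ^ s := by gcongr
    _ = 2 ^ s * (1 + (x - y) ^ 2) ^ s * (1 + y ^ 2) ^ s := by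
        rw [mul_rpow (by positivity) (by positivity), mul_rpow (by positivity) (by positivity)]

noncomputable def peetreKernel (σ : ℝ) (n : ℕ) (x : ℝ) : ℝ :=
  2 ^ (σ / 2) * (1 + x ^ 2) ^ (σ / 2) / (1 + |x| ^ n)

theorem peetreKernel_pos (σ : ℝ) (n : ℕ) (x : ℝ) : 0 < peetreKernel σ n x := by
  unfold peetreKernel; positivity

theorem measurable_peetreKernel (σ : ℝ) (n : ℕ) : Measurable (peetreKernel σ n) := by
  unfold peetreKernel; fun_prop

theorem peetreKernel_le_one_add_abs_rpow {σ : ℝ} (hσ : 0 ≤ σ) (n : ℕ) (x : ℝ) :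
    peetreKernel σ n x ≤ 2 ^ (σ / 2) * 2 ^ n * (1 + |x|) ^ (-((n : ℝ) - σ)) := by
  have hpow : (1 + |x|) ^ (-((n : ℝ) - σ)) = (1 + |x|) ^ σ / (1 + |x|) ^ n := by
    rw [← rpow_natCast, ← rpow_sub (by positivity), neg_sub]
  have hbinom : (1 + |x|) ^ n ≤ 2 ^ n * (1 + |x| ^ n) :=
    calc (1 + |x|) ^ n ≤ 2 ^ (n - 1) * (1 ^ n + |x| ^ n) :=
          add_pow_le zero_le_one (abs_nonneg x) n
      _ ≤ 2 ^ n * (1 + |x| ^ n) := by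
          rw [one_pow]; gcongr
          · norm_num
          · omega
  rw [peetreKernel, hpow, div_le_iff₀ (by positivity)]
  calc 2 ^ (σ / 2) * (1 + x ^ 2) ^ (σ / 2)
      ≤ 2 ^ (σ / 2) * (1 + |x|) ^ σ := by gcongr; exact one_add_sq_rpow_le_one_add_abs_rpow hσ x
    _ = 2 ^ (σ / 2) * ((1 + |x|) ^ σ / (1 + |x|) ^ n) * (1 + |x|) ^ n := by field_simp
    _ ≤ 2 ^ (σ / 2) * ((1 + |x|) ^ σ / (1 + |x|) ^ n) * (2 ^ n * (1 + |x| ^ n)) := by gcongr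
    _ = _ := by ring

theorem integrable_peetreKernel {σ : ℝ} (hσ : 0 ≤ σ) {n : ℕ} (hn : σ + 1 < n) :
    Integrable (peetreKernel σ n) := by
  have hdom : Integrable fun x : ℝ => 2 ^ (σ / 2) * 2 ^ n * (1 + ‖x‖) ^ (-((n : ℝ) - σ)) :=
    (integrable_one_add_norm (by simp; linarith)).const_mul _
  refine hdom.mono' (measurable_peetreKernel σ n).aestronglyMeasurable (.of_forall fun x => ?_)
  rw [Real.norm_of_nonneg (peetreKernel_pos σ n x).le, Real.norm_eq_abs]
  exact peetreKernel_le_one_add_abs_rpow hσ n x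

theorem weight_mul_div_le_peetreKernel_mul {σ : ℝ} (hσ : 0 ≤ σ) (n : ℕ) (k l : ℝ) {t : ℝ}
    (ht : 0 ≤ t) :
    (1 + k ^ 2) ^ (σ / 2) * (t / ((1 + |k - l| ^ n) * (1 + |l|))) ≤
      peetreKernel σ n (k - l) * ((1 + l ^ 2) ^ ((σ - 1) / 2) * t) := by
  have hsplit : (1 + l ^ 2) ^ (σ / 2) ≤ (1 + |l|) * (1 + l ^ 2) ^ ((σ - 1) / 2) :=
    calc (1 + l ^ 2) ^ (σ / 2) = (1 + l ^ 2) ^ ((1 : ℝ) / 2) * (1 + l ^ 2) ^ ((σ - 1) / 2) := by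
          rw [← rpow_add (by positivity)]; ring_nf
      _ ≤ (1 + |l|) * (1 + l ^ 2) ^ ((σ - 1) / 2) := by
          gcongr
          simpa using one_add_sq_rpow_le_one_add_abs_rpow zero_le_one l
  calc (1 + k ^ 2) ^ (σ / 2) * (t / ((1 + |k - l| ^ n) * (1 + |l|)))
      ≤ 2 ^ (σ / 2) * (1 + (k - l) ^ 2) ^ (σ / 2) * ((1 + |l|) * (1 + l ^ 2) ^ ((σ - 1) / 2)) *
          (t / ((1 + |k - l| ^ n) * (1 + |l|))) := by
        gcongr
        exact (peetre_inequality (by positivity) k l).trans (by gcongr)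
    _ = peetreKernel σ n (k - l) * ((1 + l ^ 2) ^ ((σ - 1) / 2) * t) := by
        rw [peetreKernel]; field_simp

theorem ofReal_weight_mul_norm_integral_le {σ : ℝ} (hσ : 0 ≤ σ) (n : ℕ) (g : ℝ → ℂ) (k : ℝ) :
    ENNReal.ofReal ((1 + k ^ 2) ^ (σ / 2) *
        ‖∫ l : ℝ, g l / (((1 + |k - l| ^ n) * (1 + |l|) : ℝ) : ℂ)‖) ≤
      ∫⁻ l, ENNReal.ofReal (peetreKernel σ n (k - l)) *
        ENNReal.ofReal ((1 + l ^ 2) ^ ((σ - 1) / 2) * ‖g l‖) := by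
  set A := (1 + k ^ 2) ^ (σ / 2)
  have hA : 0 ≤ A := by positivity
  have hnorm : ∀ l, ‖g l / (((1 + |k - l| ^ n) * (1 + |l|) : ℝ) : ℂ)‖ₑ =
      ENNReal.ofReal (‖g l‖ / ((1 + |k - l| ^ n) * (1 + |l|))) := fun l => by
    rw [← ofReal_norm, norm_div, Complex.norm_real, Real.norm_of_nonneg (by positivity)]
  calc ENNReal.ofReal (A * ‖∫ l : ℝ, g l / (((1 + |k - l| ^ n) * (1 + |l|) : ℝ) : ℂ)‖)
      = ENNReal.ofReal A * ‖∫ l : ℝ, g l / (((1 + |k - l| ^ n) * (1 + |l|) : ℝ) : ℂ)‖ₑ := by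
        rw [ENNReal.ofReal_mul hA, ofReal_norm]
    _ ≤ ENNReal.ofReal A * ∫⁻ l, ‖g l / (((1 + |k - l| ^ n) * (1 + |l|) : ℝ) : ℂ)‖ₑ := by
        gcongr; exact enorm_integral_le_lintegral_enorm _
    _ = ∫⁻ l, ENNReal.ofReal (A * (‖g l‖ / ((1 + |k - l| ^ n) * (1 + |l|)))) := by
        rw [← lintegral_const_mul' _ _ ENNReal.ofReal_ne_top]
        simp_rw [hnorm, ENNReal.ofReal_mul hA]
    _ ≤ _ := by
        gcongr with l
        rw [← ENNReal.ofReal_mul (peetreKernel_pos σ n _).le]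
        exact ENNReal.ofReal_le_ofReal
          (weight_mul_div_le_peetreKernel_mul hσ n k l (norm_nonneg _))

/-- Weighted `L²` bound for the smoothing kernel
`Bg(k) = ∫ g(ℓ)/((1+|k−ℓ|ⁿ)(1+|ℓ|)) dℓ`. -/
theorem stmt_17 (σ : ℝ) (hσ : 1 < σ) (n : ℕ) (hn : σ + 1 < (n : ℝ)) :
    ∃ C > (0:ℝ), ∀ g : ℝ → ℂ, MemLp g 2 (volume : Measure ℝ) →
      (∫⁻ k : ℝ, ENNReal.ofReal ((1 + |k| ^ 2) ^ σ *
          ‖∫ l : ℝ, g l / (((1 + |k - l| ^ n) * (1 + |l|) : ℝ) : ℂ)‖ ^ 2))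
        ≤ ENNReal.ofReal C *
            ((∫⁻ x : ℝ, ENNReal.ofReal (‖g x‖ ^ 2)) +
              ∫⁻ l : ℝ, ENNReal.ofReal ((1 + |l| ^ 2) ^ (σ - 1) * ‖g l‖ ^ 2)) := by
  have hσ0 : 0 ≤ σ := by linarith
  set I := ∫ x, peetreKernel σ n x
  have hI : ∫⁻ x, ENNReal.ofReal (peetreKernel σ n x) = ENNReal.ofReal I :=
    (ofReal_integral_eq_lintegral_ofReal (integrable_peetreKernel hσ0 hn)
      (.of_forall fun x => (peetreKernel_pos σ n x).le)).symm
  refine ⟨I ^ 2 + 1, by positivity, fun g hg => ?_⟩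
  set u : ℝ → ℝ≥0∞ := fun l => ENNReal.ofReal ((1 + l ^ 2) ^ ((σ - 1) / 2) * ‖g l‖)
  have hu : AEMeasurable u :=
    ((by fun_prop : Measurable fun l : ℝ => (1 + l ^ 2) ^ ((σ - 1) / 2)).aemeasurable.mul
      hg.aestronglyMeasurable.norm.aemeasurable).ennreal_ofReal
  have hu_sq : ∀ l, u l ^ 2 = ENNReal.ofReal ((1 + |l| ^ 2) ^ (σ - 1) * ‖g l‖ ^ 2) := fun l => by
    rw [← ENNReal.ofReal_pow (by positivity), mul_pow, ← rpow_mul_natCast (by positivity), sq_abs]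
    norm_num
  have hweight : ∀ k : ℝ, (1 + |k| ^ 2) ^ σ = ((1 + k ^ 2) ^ (σ / 2)) ^ 2 := fun k => by
    rw [sq_abs, ← rpow_mul_natCast (by positivity)]
    norm_num
  calc (∫⁻ k : ℝ, ENNReal.ofReal ((1 + |k| ^ 2) ^ σ *
          ‖∫ l : ℝ, g l / (((1 + |k - l| ^ n) * (1 + |l|) : ℝ) : ℂ)‖ ^ 2))
      ≤ ∫⁻ k, (∫⁻ l, ENNReal.ofReal (peetreKernel σ n (k - l)) * u l) ^ 2 := by
        gcongr with k
        rw [hweight, ← mul_pow, ENNReal.ofReal_pow (by positivity)]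
        gcongr
        exact ofReal_weight_mul_norm_integral_le hσ0 n g k
    _ ≤ (∫⁻ x, ENNReal.ofReal (peetreKernel σ n x)) ^ 2 * ∫⁻ l, u l ^ 2 :=
        ENNReal.lintegral_convolution_sq_le (measurable_peetreKernel σ n).ennreal_ofReal hu
    _ ≤ ENNReal.ofReal (I ^ 2 + 1) *
          ((∫⁻ x : ℝ, ENNReal.ofReal (‖g x‖ ^ 2)) +
            ∫⁻ l : ℝ, ENNReal.ofReal ((1 + |l| ^ 2) ^ (σ - 1) * ‖g l‖ ^ 2)) := by
        rw [hI, lintegral_congr hu_sq, ← ENNReal.ofReal_pow (integral_nonneg _)]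
        · gcongr
          · linarith
          · exact le_add_self
        · exact fun x => (peetreKernel_pos σ n x).le
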